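/- arXiv:1710.07752 — 5 statements merged into one kernel-verified Lean document; each statement's English description precedes it below -/
import Mathlib

section
/- For any category C, the canonical functor κ_C : C → Ω (sending an object x to the pointed category (C, x) and an arrow φ : x → y to the equivalence class of the pair (Hom_C, φ), where correspondences F : C^op × C → Set with distinguished element are identified up to natural isomorphism preserving the distinguished element) is faithful if and only if the only natural automorphism of the identity functor Id_C is the identity natural transformation. -/
open CategoryTheory Opposite

/-!
A natural transformation `Φ : Hom_C ⟶ Hom_C` is determined by its values `Φ (𝟙 a) : a ⟶ a`: naturality
in each variable gives `Φ f = f ≫ Φ (𝟙 y) = Φ (𝟙 x) ≫ f`, so these values form an endomorphism of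
`𝟭 C`, and `Φ` is postcomposition with it. Hence automorphisms of `Hom_C` and of `𝟭 C` correspond,
and some `Φ` moves an arrow exactly when some natural automorphism of `𝟭 C` is not the identity.
-/

section

variable {C : Type*} [Category C]

def homIsoOfIdIso (α : 𝟭 C ≅ 𝟭 C) : Functor.hom C ≅ Functor.hom C :=
  Functor.isoWhiskerRight (NatIso.prod (Iso.refl (𝟭 Cᵒᵖ)) α) (Functor.hom C)

lemma homIsoOfIdIso_hom_app (α : 𝟭 C ≅ 𝟭 C) {x y : C} (f : x ⟶ y) :
    (homIsoOfIdIso α).hom.app (op x, y) f = f ≫ α.hom.app y := by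
  simp only [homIsoOfIdIso, Functor.isoWhiskerRight_hom, NatIso.prod_hom, Iso.refl_hom,
    Functor.whiskerRight_app, Functor.prod_obj, Functor.id_obj, Functor.hom_map, NatTrans.prod_app_fst,
    NatTrans.id_app, unop_id, NatTrans.prod_app_snd, Category.id_comp]
  rfl

lemma homEnd_app_eq_comp_app_id (Φ : Functor.hom C ⟶ Functor.hom C) {x y : C} (f : x ⟶ y) :
    Φ.app (op x, y) f = f ≫ Φ.app (op y, y) (𝟙 y) := by
  have h := NatTrans.naturality_apply Φ ((f.op, 𝟙 y) : (op y, y) ⟶ (op x, y)) (𝟙 y)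
  change Φ.app (op x, y) (f ≫ 𝟙 y ≫ 𝟙 y) = f ≫ (Φ.app (op y, y) (𝟙 y) : y ⟶ y) ≫ 𝟙 y at h
  simpa using h.trans (congrArg (f ≫ ·) (Category.comp_id _))

lemma homEnd_app_eq_app_id_comp (Φ : Functor.hom C ⟶ Functor.hom C) {x y : C} (f : x ⟶ y) :
    Φ.app (op x, y) f = Φ.app (op x, x) (𝟙 x) ≫ f := by
  have h := NatTrans.naturality_apply Φ ((𝟙 (op x), f) : (op x, x) ⟶ (op x, y)) (𝟙 x)
  change Φ.app (op x, y) (𝟙 x ≫ 𝟙 x ≫ f) = 𝟙 x ≫ Φ.app (op x, x) (𝟙 x) ≫ f at h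
  simpa using h

def idEndOfHomEnd (Φ : Functor.hom C ⟶ Functor.hom C) : 𝟭 C ⟶ 𝟭 C where
  app a := Φ.app (op a, a) (𝟙 a)
  naturality _ _ k := (homEnd_app_eq_comp_app_id Φ k).symm.trans (homEnd_app_eq_app_id_comp Φ k)

lemma idEndOfHomEnd_comp (Φ Ψ : Functor.hom C ⟶ Functor.hom C) :
    idEndOfHomEnd (Φ ≫ Ψ) = idEndOfHomEnd Φ ≫ idEndOfHomEnd Ψ := by
  ext a
  exact homEnd_app_eq_comp_app_id Ψ _

lemma idEndOfHomEnd_id : idEndOfHomEnd (𝟙 (Functor.hom C)) = 𝟙 (𝟭 C) := rfl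

def idIsoOfHomIso (Φ : Functor.hom C ≅ Functor.hom C) : 𝟭 C ≅ 𝟭 C where
  hom := idEndOfHomEnd Φ.hom
  inv := idEndOfHomEnd Φ.inv
  hom_inv_id := by rw [← idEndOfHomEnd_comp, Φ.hom_inv_id, idEndOfHomEnd_id]
  inv_hom_id := by rw [← idEndOfHomEnd_comp, Φ.inv_hom_id, idEndOfHomEnd_id]

end

theorem stmt0 {C : Type u} [Category.{v} C] :
    (∀ (x y : C) (f g : x ⟶ y),
        (∃ Φ : Functor.hom C ≅ Functor.hom C, Φ.hom.app (op x, y) f = g) → f = g)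
      ↔ (∀ α : 𝟭 C ≅ 𝟭 C, α = Iso.refl (𝟭 C)) := by
  constructor
  · intro hfaithful α
    ext x
    exact (hfaithful x x (𝟙 x) (α.hom.app x)
      ⟨homIsoOfIdIso α, (homIsoOfIdIso_hom_app α (𝟙 x)).trans (Category.id_comp _)⟩).symm
  · rintro htrivial x y f g ⟨Φ, rfl⟩
    have hΦ : (idIsoOfHomIso Φ).hom.app y = 𝟙 y := by rw [htrivial (idIsoOfHomIso Φ)]; rfl
    rw [homEnd_app_eq_comp_app_id]
    exact ((congrArg (f ≫ ·) hΦ).trans (Category.comp_id f)).symm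
end

section
/- For any ring k (with at least two elements, or trivially for the zero ring), the only natural automorphism of the identity functor of the category of commutative k-algebras is the identity natural transformation; i.e., Aut(Id_{k-Alg}) is trivial. -/
/-!
The polynomial ring `k[X]` corepresents the forgetful functor, so a natural endomorphism `τ` of
the identity is evaluation at the single polynomial `q = τ(X)`. Multiplicativity of `τ` on
`k[X][Y]`, applied to `X * Y`, shows that the coefficients of `q` are orthogonal idempotents;
invertibility of `τ` gives `r ∘ q = X` for `r = τ⁻¹(X)`, so by the chain rule `q'(0) = q₁` is a
unit. A unit idempotent is `1`, and orthogonality to it kills every other coefficient: `q = X`.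
-/

open CategoryTheory Polynomial

namespace Polynomial

variable {R : Type*} [CommRing R]

theorem isUnit_coeff_one_of_comp_eq_X {p q : R[X]} (h : p.comp q = X) : IsUnit (q.coeff 1) := by
  have hunit : IsUnit (derivative q) :=
    IsUnit.of_mul_eq_one _ (by rw [← derivative_comp, h, derivative_X])
  simpa [coeff_derivative] using hunit.map (constantCoeff (R := R))

theorem eq_X_of_orthogonalIdempotents_coeff {p q : R[X]} (hq : OrthogonalIdempotents q.coeff)
    (hpq : p.comp q = X) : q = X := by
  have hq₁ : q.coeff 1 = 1 :=
    (IsIdempotentElem.iff_eq_one_of_isUnit (isUnit_coeff_one_of_comp_eq_X hpq)).mp (hq.idem 1)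
  ext n
  rcases eq_or_ne n 1 with rfl | hn
  · simp [hq₁]
  · simpa [hq₁, hn, coeff_X, eq_comm] using hq.ortho hn

theorem coeff_coeff_map_C_comp_X_mul_C_X (q : R[X]) (n m : ℕ) :
    (((q.map C).comp (X * C X)).coeff n).coeff m = if n = m then q.coeff n else 0 := by
  rw [mul_comm, comp_C_mul_X_coeff, coeff_map, coeff_C_mul_X_pow]
  simp only [eq_comm]

end Polynomial

namespace CommRingCat

variable {R : CommRingCat.{u}}

noncomputable def aevalUnder (A : Under R) (a : A) : mkUnder R R[X] ⟶ A :=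
  Under.homMk (ofHom (aeval (R := R) a).toRingHom) (by ext; exact aeval_C a _)

noncomputable def polynomialOfNatTrans (τ : 𝟭 (Under R) ⟶ 𝟭 (Under R)) : R[X] :=
  (τ.app (mkUnder R R[X])).right X

theorem natTrans_app_right_eq_aeval (τ : 𝟭 (Under R) ⟶ 𝟭 (Under R)) (A : Under R) (a : A) :
    (τ.app A).right a = aeval a (polynomialOfNatTrans τ) := by
  have h := congr_arg (fun f => f.right.hom X) (τ.naturality (aevalUnder A a))
  simp only [aevalUnder, Functor.id_map, Under.comp_right, hom_comp, RingHom.comp_apply,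
    Under.homMk_right, hom_ofHom, AlgHom.toRingHom_eq_coe, RingHom.coe_coe] at h
  rwa [aeval_X] at h

theorem orthogonalIdempotents_coeff_polynomialOfNatTrans (τ : 𝟭 (Under R) ⟶ 𝟭 (Under R)) :
    OrthogonalIdempotents (polynomialOfNatTrans τ).coeff := by
  set q := polynomialOfNatTrans τ
  -- `X` and `C X` are independent variables of `R[X][X]`
  have hmul := map_mul (τ.app (mkUnder R R[X][X])).right.hom X (C X)
  have happ : ∀ x : R[X][X], (τ.app (mkUnder R R[X][X])).right x = (q.map C).comp x := fun x => by
    rw [natTrans_app_right_eq_aeval, comp, eval₂_map]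
    rfl
  rw [happ, happ, happ, comp_C, Polynomial.eval_map, eval₂_C_X, comp_X] at hmul
  refine OrthogonalIdempotents.iff_mul_eq.mpr fun n m => ?_
  have h := congr_arg (fun p => (p.coeff n).coeff m) hmul
  rwa [coeff_coeff_map_C_comp_X_mul_C_X, coeff_mul_C, coeff_map, coeff_C_mul, eq_comm] at h

theorem natTrans_eq_id_of_polynomialOfNatTrans_eq_X (τ : 𝟭 (Under R) ⟶ 𝟭 (Under R))
    (h : polynomialOfNatTrans τ = X) : τ = 𝟙 _ := by
  ext A a
  rw [natTrans_app_right_eq_aeval, h, aeval_X]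
  rfl

theorem polynomialOfNatTrans_comp_eq_X_of_comp_eq_id {τ σ : 𝟭 (Under R) ⟶ 𝟭 (Under R)}
    (h : τ ≫ σ = 𝟙 _) : (polynomialOfNatTrans σ).comp (polynomialOfNatTrans τ) = X := by
  calc (polynomialOfNatTrans σ).comp (polynomialOfNatTrans τ)
      = (σ.app _).right ((τ.app (mkUnder R R[X])).right X) :=
        (natTrans_app_right_eq_aeval σ (mkUnder R R[X]) (polynomialOfNatTrans τ)).symm
    _ = ((τ ≫ σ).app (mkUnder R R[X])).right X := rfl
    _ = X := by rw [h]; rfl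

end CommRingCat

theorem stmt1 (k : Type u) [CommRing k]
    (α : 𝟭 (Under (CommRingCat.of k)) ≅ 𝟭 (Under (CommRingCat.of k))) :
    α = Iso.refl (𝟭 (Under (CommRingCat.of k))) := by
  have hcomp := CommRingCat.polynomialOfNatTrans_comp_eq_X_of_comp_eq_id α.hom_inv_id
  have hX := eq_X_of_orthogonalIdempotents_coeff
    (CommRingCat.orthogonalIdempotents_coeff_polynomialOfNatTrans α.hom) hcomp
  exact Iso.ext (CommRingCat.natTrans_eq_id_of_polynomialOfNatTrans_eq_X α.hom hX)
end

section
/- For any functor F : C → D, the assignment sending each object c ∈ C to the Ω-morphism [(Hom_D ∘ (F^op × Id_D), id_{F(c)})] : (C, c) → (D, F(c)) defines a natural transformation κ_{tw,F} : κ_C → κ_D ∘ F between the canonical functors C → Ω, and dually the assignment c ↦ [(Hom_D ∘ (Id_D^op × F), id_{F(c)})] defines a natural transformation κ_{cotw,F} : κ_D ∘ F → κ_C. -/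
/-!
`Hom_C` and `Hom_D` are two-sided units for the composition of correspondences: by the
co-Yoneda lemma `[d, a, x] ↦ F(a, 1) x` identifies `Hom_C *_Ω F` with `F`, and
`[d, y, b] ↦ F(1, b) y` identifies `F *_Ω Hom_D` with `F`. Hence both sides of each
naturality square are isomorphic to the twist (resp. cotwist) correspondence itself, and the
two distinguished elements match because both are sent to `K g`.
-/

open CategoryTheory Opposite

universe u

variable {B C D E : Type u} [SmallCategory B] [SmallCategory C] [SmallCategory D]
  [SmallCategory E]

/-- The relation generated by arrows of the middle category, defining the
coend-style composite of two correspondences. -/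
def OmegaRel (F : Cᵒᵖ × D ⥤ Type u) (G : Dᵒᵖ × E ⥤ Type u) (c : Cᵒᵖ) (e : E) :
    (Σ d : D, F.obj (c, d) × G.obj (op d, e)) →
      (Σ d : D, F.obj (c, d) × G.obj (op d, e)) → Prop :=
  fun s t => ∃ f : s.1 ⟶ t.1,
    F.map ((𝟙 c, f) : ((c, s.1) : Cᵒᵖ × D) ⟶ (c, t.1)) s.2.1 = t.2.1 ∧
    G.map ((f.op, 𝟙 e) : ((op t.1, e) : Dᵒᵖ × E) ⟶ (op s.1, e)) t.2.2 = s.2.2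

/-- The composite `F *_Ω G` of two correspondences. -/
def omegaComp (F : Cᵒᵖ × D ⥤ Type u) (G : Dᵒᵖ × E ⥤ Type u) :
    Cᵒᵖ × E ⥤ Type u where
  obj p := Quot (OmegaRel F G p.1 p.2)
  map {p q} g := TypeCat.ofHom (
    Quot.map
      (fun s => ⟨s.1, F.map ((g.1, 𝟙 s.1) : ((p.1, s.1) : Cᵒᵖ × D) ⟶ (q.1, s.1)) s.2.1,
        G.map ((𝟙 (op s.1), g.2) : ((op s.1, p.2) : Dᵒᵖ × E) ⟶ (op s.1, q.2)) s.2.2⟩)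
      (by
        rintro ⟨d, a, b⟩ ⟨d', a', b'⟩ ⟨f, h1, h2⟩
        dsimp at *
        refine ⟨f, ?_, ?_⟩
        · have harr :
              CategoryStruct.comp (X := ((p.1, d) : Cᵒᵖ × D))
                (Y := ((q.1, d) : Cᵒᵖ × D)) (Z := ((q.1, d') : Cᵒᵖ × D))
                (g.1, 𝟙 d) (𝟙 q.1, f)
              = CategoryStruct.comp (X := ((p.1, d) : Cᵒᵖ × D))
                (Y := ((p.1, d') : Cᵒᵖ × D)) (Z := ((q.1, d') : Cᵒᵖ × D))
                (𝟙 p.1, f) (g.1, 𝟙 d') := by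
            show ((g.1 ≫ 𝟙 q.1, 𝟙 d ≫ f) : ((p.1, d) : Cᵒᵖ × D) ⟶ (q.1, d'))
              = (𝟙 p.1 ≫ g.1, f ≫ 𝟙 d')
            simp
          rw [← h1, ← FunctorToTypes.map_comp_apply, ← FunctorToTypes.map_comp_apply,
            harr]
        · have harr :
              CategoryStruct.comp (X := ((op d', p.2) : Dᵒᵖ × E))
                (Y := ((op d', q.2) : Dᵒᵖ × E)) (Z := ((op d, q.2) : Dᵒᵖ × E))
                (𝟙 (op d'), g.2) (f.op, 𝟙 q.2)
              = CategoryStruct.comp (X := ((op d', p.2) : Dᵒᵖ × E))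
                (Y := ((op d, p.2) : Dᵒᵖ × E)) (Z := ((op d, q.2) : Dᵒᵖ × E))
                (f.op, 𝟙 p.2) (𝟙 (op d), g.2) := by
            show ((𝟙 (op d') ≫ f.op, g.2 ≫ 𝟙 q.2) : ((op d', p.2) : Dᵒᵖ × E) ⟶ (op d, q.2))
              = (f.op ≫ 𝟙 (op d), 𝟙 p.2 ≫ g.2)
            simp
          rw [← h2, ← FunctorToTypes.map_comp_apply, ← FunctorToTypes.map_comp_apply,
            harr]))
  map_id p := by
    ext z
    induction z using Quot.ind with
    | _ s =>
      rcases s with ⟨d, a, b⟩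
      have ha : F.map (((𝟙 p : p ⟶ p).1, 𝟙 d) :
          ((p.1, d) : Cᵒᵖ × D) ⟶ (p.1, d)) a = a := by
        rw [show ((((𝟙 p : p ⟶ p).1, 𝟙 d)) : ((p.1, d) : Cᵒᵖ × D) ⟶ (p.1, d))
            = 𝟙 ((p.1, d) : Cᵒᵖ × D) from rfl, FunctorToTypes.map_id_apply]
      have hb : G.map ((𝟙 (op d), (𝟙 p : p ⟶ p).2) :
          ((op d, p.2) : Dᵒᵖ × E) ⟶ (op d, p.2)) b = b := by
        rw [show ((𝟙 (op d), (𝟙 p : p ⟶ p).2) : ((op d, p.2) : Dᵒᵖ × E) ⟶ (op d, p.2))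
            = 𝟙 ((op d, p.2) : Dᵒᵖ × E) from rfl, FunctorToTypes.map_id_apply]
      show Quot.mk (OmegaRel F G p.1 p.2)
          ⟨d, F.map (((𝟙 p : p ⟶ p).1, 𝟙 d) : ((p.1, d) : Cᵒᵖ × D) ⟶ (p.1, d)) a,
            G.map ((𝟙 (op d), (𝟙 p : p ⟶ p).2) :
              ((op d, p.2) : Dᵒᵖ × E) ⟶ (op d, p.2)) b⟩
          = Quot.mk (OmegaRel F G p.1 p.2) ⟨d, a, b⟩
      rw [ha, hb]
  map_comp {p q r} g g' := by
    ext z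
    induction z using Quot.ind with
    | _ s =>
      rcases s with ⟨d, a, b⟩
      have harrF :
          CategoryStruct.comp (X := ((p.1, d) : Cᵒᵖ × D))
            (Y := ((q.1, d) : Cᵒᵖ × D)) (Z := ((r.1, d) : Cᵒᵖ × D))
            (g.1, 𝟙 d) (g'.1, 𝟙 d)
          = ((((g ≫ g') : p ⟶ r).1, 𝟙 d) : ((p.1, d) : Cᵒᵖ × D) ⟶ (r.1, d)) := by
        show ((g.1 ≫ g'.1, 𝟙 d ≫ 𝟙 d) : ((p.1, d) : Cᵒᵖ × D) ⟶ (r.1, d))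
          = ((g ≫ g').1, 𝟙 d)
        simp
      have harrG :
          CategoryStruct.comp (X := ((op d, p.2) : Dᵒᵖ × E))
            (Y := ((op d, q.2) : Dᵒᵖ × E)) (Z := ((op d, r.2) : Dᵒᵖ × E))
            (𝟙 (op d), g.2) (𝟙 (op d), g'.2)
          = ((𝟙 (op d), ((g ≫ g') : p ⟶ r).2) :
              ((op d, p.2) : Dᵒᵖ × E) ⟶ (op d, r.2)) := by
        show ((𝟙 (op d) ≫ 𝟙 (op d), g.2 ≫ g'.2) : ((op d, p.2) : Dᵒᵖ × E) ⟶ (op d, r.2))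
          = (𝟙 (op d), (g ≫ g').2)
        simp
      have ha : F.map ((((g ≫ g') : p ⟶ r).1, 𝟙 d) :
            ((p.1, d) : Cᵒᵖ × D) ⟶ (r.1, d)) a
          = F.map ((g'.1, 𝟙 d) : ((q.1, d) : Cᵒᵖ × D) ⟶ (r.1, d))
              (F.map ((g.1, 𝟙 d) : ((p.1, d) : Cᵒᵖ × D) ⟶ (q.1, d)) a) := by
        rw [← harrF, FunctorToTypes.map_comp_apply]
      have hb : G.map ((𝟙 (op d), ((g ≫ g') : p ⟶ r).2) :
            ((op d, p.2) : Dᵒᵖ × E) ⟶ (op d, r.2)) b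
          = G.map ((𝟙 (op d), g'.2) : ((op d, q.2) : Dᵒᵖ × E) ⟶ (op d, r.2))
              (G.map ((𝟙 (op d), g.2) : ((op d, p.2) : Dᵒᵖ × E) ⟶ (op d, q.2)) b) := by
        rw [← harrG, FunctorToTypes.map_comp_apply]
      show Quot.mk (OmegaRel F G r.1 r.2)
          ⟨d, F.map ((((g ≫ g') : p ⟶ r).1, 𝟙 d) : ((p.1, d) : Cᵒᵖ × D) ⟶ (r.1, d)) a,
            G.map ((𝟙 (op d), ((g ≫ g') : p ⟶ r).2) :
              ((op d, p.2) : Dᵒᵖ × E) ⟶ (op d, r.2)) b⟩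
          = Quot.mk (OmegaRel F G r.1 r.2)
          ⟨d, F.map ((g'.1, 𝟙 d) : ((q.1, d) : Cᵒᵖ × D) ⟶ (r.1, d))
                (F.map ((g.1, 𝟙 d) : ((p.1, d) : Cᵒᵖ × D) ⟶ (q.1, d)) a),
              G.map ((𝟙 (op d), g'.2) : ((op d, q.2) : Dᵒᵖ × E) ⟶ (op d, r.2))
                (G.map ((𝟙 (op d), g.2) : ((op d, p.2) : Dᵒᵖ × E) ⟶ (op d, q.2)) b)⟩
      rw [ha, hb]

/-- The correspondence `(x, y) ↦ Hom_D(K x, y)` attached to a functor `K`. -/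
def corr {C D : Type u} [SmallCategory C] [SmallCategory D] (K : C ⥤ D) :
    Cᵒᵖ × D ⥤ Type u :=
  K.op.prod (𝟭 D) ⋙ Functor.hom D

/-- The correspondence `(y, x) ↦ Hom_D(y, K x)` attached to a functor `K`. -/
def cocorr {C D : Type u} [SmallCategory C] [SmallCategory D] (K : C ⥤ D) :
    Dᵒᵖ × C ⥤ Type u :=
  (𝟭 D).op.prod K ⋙ Functor.hom D

namespace omegaComp

variable (F : Cᵒᵖ × D ⥤ Type u)

def leftUnitorEquiv (p : Cᵒᵖ × D) : (omegaComp (Functor.hom C) F).obj p ≃ F.obj p where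
  toFun := Quot.lift
    (fun s => F.map ((s.2.1.op, 𝟙 p.2) : ((op s.1, p.2) : Cᵒᵖ × D) ⟶ (p.1, p.2)) s.2.2) (by
      rintro ⟨d, (a : unop p.1 ⟶ d), x⟩ ⟨d', (a' : unop p.1 ⟶ d'), x'⟩
        ⟨(f : d ⟶ d'), ha, hx⟩
      change 𝟙 _ ≫ a ≫ f = a' at ha
      change F.map ((f.op, 𝟙 p.2) : ((op d', p.2) : Cᵒᵖ × D) ⟶ (op d, p.2)) x' = x at hx
      rw [Category.id_comp] at ha
      subst ha hx
      rw [← Functor.map_comp_apply, prod_comp, Category.comp_id]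
      rfl)
  invFun x := Quot.mk _ ⟨unop p.1, 𝟙 _, x⟩
  left_inv := by
    rintro ⟨d, (a : unop p.1 ⟶ d), x⟩
    exact Quot.sound ⟨a, by change 𝟙 _ ≫ 𝟙 _ ≫ a = a; simp, rfl⟩
  right_inv x := Functor.map_id_apply F _ x

def rightUnitorEquiv (p : Cᵒᵖ × D) : (omegaComp F (Functor.hom D)).obj p ≃ F.obj p where
  toFun := Quot.lift
    (fun s => F.map ((𝟙 p.1, s.2.2) : ((p.1, s.1) : Cᵒᵖ × D) ⟶ (p.1, p.2)) s.2.1) (by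
      rintro ⟨d, x, (b : d ⟶ p.2)⟩ ⟨d', x', (b' : d' ⟶ p.2)⟩
        ⟨(f : d ⟶ d'), hx, hb⟩
      change F.map ((𝟙 p.1, f) : ((p.1, d) : Cᵒᵖ × D) ⟶ (p.1, d')) x = x' at hx
      change f ≫ b' ≫ 𝟙 _ = b at hb
      rw [Category.comp_id] at hb
      subst hx hb
      change F.map ((𝟙 p.1, f ≫ b') : ((p.1, d) : Cᵒᵖ × D) ⟶ (p.1, p.2)) x =
        F.map ((𝟙 p.1, b') : ((p.1, d') : Cᵒᵖ × D) ⟶ (p.1, p.2))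
          (F.map ((𝟙 p.1, f) : ((p.1, d) : Cᵒᵖ × D) ⟶ (p.1, d')) x)
      rw [← Functor.map_comp_apply, prod_comp, Category.comp_id])
  invFun x := Quot.mk _ ⟨p.2, x, 𝟙 _⟩
  left_inv := by
    rintro ⟨d, x, (b : d ⟶ p.2)⟩
    exact (Quot.sound ⟨b, rfl, by change b ≫ 𝟙 _ ≫ 𝟙 _ = b; simp⟩).symm
  right_inv x := Functor.map_id_apply F _ x

def leftUnitor : omegaComp (Functor.hom C) F ≅ F :=
  NatIso.ofComponents (fun p => (leftUnitorEquiv F p).toIso) (by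
    rintro p q g
    ext ⟨d, (a : unop p.1 ⟶ d), x⟩
    change F.map _ (F.map _ x) = F.map g (F.map _ x)
    simp only [← Functor.map_comp_apply]
    refine congrArg (fun φ => F.map φ x) (Prod.hom_ext ?_ ?_)
    · change 𝟙 _ ≫ (g.1.unop ≫ a ≫ 𝟙 d).op = a.op ≫ g.1
      simp
    · simp)

def rightUnitor : omegaComp F (Functor.hom D) ≅ F :=
  NatIso.ofComponents (fun p => (rightUnitorEquiv F p).toIso) (by
    rintro p q g
    ext ⟨d, x, (b : d ⟶ p.2)⟩
    change F.map _ (F.map _ x) = F.map g (F.map _ x)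
    simp only [← Functor.map_comp_apply]
    refine congrArg (fun φ => F.map φ x) (Prod.hom_ext ?_ ?_)
    · simp
    · change 𝟙 d ≫ ((𝟙 (op d)).unop ≫ b ≫ g.2) = b ≫ g.2
      simp)

lemma leftUnitor_trans_rightUnitor_symm_hom_app_mk {c : Cᵒᵖ} {e : D} {c' : C}
    (a : unop c ⟶ c') (x : F.obj (op c', e)) {d : D} (y : F.obj (c, d)) (b : d ⟶ e)
    (h : F.map ((a.op, 𝟙 e) : ((op c', e) : Cᵒᵖ × D) ⟶ (c, e)) x =
      F.map ((𝟙 c, b) : ((c, d) : Cᵒᵖ × D) ⟶ (c, e)) y) :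
    (leftUnitor F ≪≫ (rightUnitor F).symm).hom.app (c, e)
        (Quot.mk (OmegaRel (Functor.hom C) F c e) ⟨c', a, x⟩) =
      Quot.mk (OmegaRel F (Functor.hom D) c e) ⟨d, y, b⟩ := by
  change (rightUnitorEquiv F (c, e)).symm (F.map _ x) = _
  exact (Equiv.symm_apply_eq _).2 h

end omegaComp

theorem stmt6 {C D : Type u} [SmallCategory C] [SmallCategory D]
    (K : C ⥤ D) {c c' : C} (g : c ⟶ c') :
    -- naturality of the κ-twist: κ_D(K g) ∘ κ_{tw}(c) = κ_{tw}(c') ∘ κ_C(g)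
    (∃ Φ : omegaComp (Functor.hom C) (corr K) ≅ omegaComp (corr K) (Functor.hom D),
      Φ.hom.app (op c, K.obj c')
          (Quot.mk (OmegaRel (Functor.hom C) (corr K) (op c) (K.obj c'))
            ⟨c', g, 𝟙 (K.obj c')⟩)
        = Quot.mk (OmegaRel (corr K) (Functor.hom D) (op c) (K.obj c'))
            ⟨K.obj c, 𝟙 (K.obj c), K.map g⟩) ∧
    -- naturality of the κ-cotwist: κ_C(g) ∘ κ_{cotw}(c) = κ_{cotw}(c') ∘ κ_D(K g)
    (∃ Ψ : omegaComp (Functor.hom D) (cocorr K) ≅ omegaComp (cocorr K) (Functor.hom C),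
      Ψ.hom.app (op (K.obj c), c')
          (Quot.mk (OmegaRel (Functor.hom D) (cocorr K) (op (K.obj c)) c')
            ⟨K.obj c', K.map g, 𝟙 (K.obj c')⟩)
        = Quot.mk (OmegaRel (cocorr K) (Functor.hom C) (op (K.obj c)) c')
            ⟨c, 𝟙 (K.obj c), g⟩) := by
  refine ⟨⟨_, omegaComp.leftUnitor_trans_rightUnitor_symm_hom_app_mk (corr K) g
      (𝟙 (K.obj c')) (𝟙 (K.obj c)) (K.map g) ?_⟩,
    ⟨_, omegaComp.leftUnitor_trans_rightUnitor_symm_hom_app_mk (cocorr K) (K.map g)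
      (𝟙 (K.obj c')) (𝟙 (K.obj c)) g ?_⟩⟩
  · change K.map g ≫ 𝟙 _ ≫ 𝟙 _ = K.map (𝟙 c) ≫ 𝟙 _ ≫ K.map g
    simp
  · change K.map g ≫ 𝟙 _ ≫ K.map (𝟙 c') = 𝟙 _ ≫ 𝟙 _ ≫ K.map g
    simp
end

section
/- For any small category C, the canonical functor κ_{Path(C)} : Path(C) → Ω is faithful; equivalently, the only natural automorphism of the identity functor of the path category Path(C) is the identity. -/
/-!
Path length is additive and only identities have length zero, so in `Paths C` an endomorphism
with a right inverse is the identity. The component at `x` of a natural automorphism of `𝟭` is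
such an endomorphism; by Yoneda, a natural automorphism `Φ` of the hom functor acts by
postcomposition with `Φ (𝟙 y)`, which is again one, so `Φ` fixes every arrow.
-/

open CategoryTheory Opposite

theorem Paths.eq_id_of_comp_eq_id {V : Type*} [Quiver V] {y : Paths V} {u v : y ⟶ y}
    (h : u ≫ v = 𝟙 y) : u = 𝟙 y := by
  have hlen : u.length + v.length = 0 :=
    (Quiver.Path.length_comp u v).symm.trans (congrArg Quiver.Path.length h)
  exact Quiver.Path.eq_nil_of_length_zero u (by omega)

section
variable {C : Type*} [Category C]

theorem Functor.hom_natTrans_app_eq_comp (τ : Functor.hom C ⟶ Functor.hom C) {x y : C}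
    (f : x ⟶ y) : τ.app (op x, y) f = f ≫ τ.app (op y, y) (𝟙 y) := by
  have h : τ.app (op x, y) (f ≫ 𝟙 y ≫ 𝟙 y) = f ≫ τ.app (op y, y) (𝟙 y) ≫ 𝟙 y :=
    NatTrans.naturality_apply τ (show (op y, y) ⟶ (op x, y) from (f.op, 𝟙 y)) (𝟙 y)
  simpa only [Category.comp_id] using h.trans (congrArg (f ≫ ·) (Category.comp_id (X := y) _))

theorem Functor.hom_iso_app_id_comp_inv_app_id (Φ : Functor.hom C ≅ Functor.hom C) (y : C) :
    Φ.hom.app (op y, y) (𝟙 y) ≫ Φ.inv.app (op y, y) (𝟙 y) = 𝟙 y :=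
  (Functor.hom_natTrans_app_eq_comp Φ.inv (x := y) (y := y) _).symm.trans
    (Iso.hom_inv_id_app_apply Φ (op y, y) (𝟙 y))
end

theorem stmt9 {C : Type u} [Category.{v} C] :
    (∀ (x y : Paths C) (f g : x ⟶ y),
        (∃ Φ : Functor.hom (Paths C) ≅ Functor.hom (Paths C),
          Φ.hom.app (op x, y) f = g) → f = g) ∧
      (∀ α : 𝟭 (Paths C) ≅ 𝟭 (Paths C), α = Iso.refl (𝟭 (Paths C))) := by
  refine ⟨fun x y f g ⟨Φ, hΦ⟩ => ?_, fun α => ?_⟩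
  · have hid : Φ.hom.app (op y, y) (𝟙 y) = 𝟙 y :=
      Paths.eq_id_of_comp_eq_id (Functor.hom_iso_app_id_comp_inv_app_id Φ y)
    rw [← hΦ, Functor.hom_natTrans_app_eq_comp, hid, Category.comp_id]
  · ext x
    exact Paths.eq_id_of_comp_eq_id (α.hom_inv_id_app x)
end

section
/- Let Skel : Cat → SCat be the quotient functor to the category with the same objects as Cat and with morphisms the isomorphism classes of functors (two functors being identified iff they are naturally isomorphic). Given two functors φ, ψ with common codomain E, the (Skel)-limit of the cospan is the subcategory L of dom(φ) × dom(ψ) whose arrows are the pairs (f, g) such that there exist isomorphisms u, v in E with u ∘ φ(f) = ψ(g) ∘ v. Then: any category M with functors p : M → dom(φ), q : M → dom(ψ) such that φ ∘ p is naturally isomorphic to ψ ∘ q admits a functor M → L commuting with the projections to dom(φ) and dom(ψ). -/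
open CategoryTheory

theorem stmt13 {A : Type u₁} {B : Type u₂} {E : Type u₃} {M : Type u₄}
    [Category.{v₁} A] [Category.{v₂} B] [Category.{v₃} E] [Category.{v₄} M]
    (φ : A ⥤ E) (ψ : B ⥤ E) (p : M ⥤ A) (q : M ⥤ B) (h : p ⋙ φ ≅ q ⋙ ψ) :
    ∃ r : M ⥤ A × B,
      r ⋙ CategoryTheory.Prod.fst A B = p ∧
      r ⋙ CategoryTheory.Prod.snd A B = q ∧
      ∀ {m m' : M} (t : m ⟶ m'),
        ∃ (u : φ.obj (r.obj m').1 ≅ ψ.obj (r.obj m').2)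
          (v : φ.obj (r.obj m).1 ≅ ψ.obj (r.obj m).2),
          φ.map (r.map t).1 ≫ u.hom = v.hom ≫ ψ.map (r.map t).2 :=
  ⟨p.prod' q, rfl, rfl, fun t => ⟨h.app _, h.app _, h.hom.naturality t⟩⟩
end
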